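/- Let 0 < α, β ≤ 1 with 1 < α + β ≤ 2, a < b, q : [a,b] → ℝ continuous, and let u : [a,b] → ℝ be continuous, not identically zero, satisfying the integral equation u(t) = ∫_a^b G(t,r) q(r) u(r) dr for all t ∈ [a,b], where G(t,r) = (1/(Γ(α)Γ(β))) ∫_a^{min(t,r)} (t-s)^{β-1}(r-s)^{α-1} ds. Then ∫_a^b |q(r)| dr ≥ (α+β-1)Γ(α)Γ(β)/(b-a)^{α+β-1}. -/

import Mathlib

open Real MeasureTheory Set

noncomputable def G (a α β t r : ℝ) : ℝ :=
  (1 / (Real.Gamma α * Real.Gamma β)) *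
    ∫ s in a..(min t r), (t - s) ^ (β - 1) * (r - s) ^ (α - 1)

/-!
Both exponents `β - 1` and `α - 1` are nonpositive, so for `s < min t r` the integrand defining
`G t r` is at most `(min t r - s) ^ (α + β - 2)`; integrating gives
`0 ≤ G t r ≤ (b - a) ^ (α + β - 1) / ((α + β - 1) Γ(α) Γ(β))`. Evaluating the integral equation
at a point `t₀` where `|u|` is maximal then yields `|u t₀| ≤ sup G · |u t₀| · ∫ |q|`, and
`|u t₀| > 0`.
-/

lemma rpow_mul_rpow_le_rpow_add_of_nonpos {x y z γ δ : ℝ} (hx : 0 < x) (hxy : x ≤ y)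
    (hxz : x ≤ z) (hγ : γ ≤ 0) (hδ : δ ≤ 0) : y ^ γ * z ^ δ ≤ x ^ (γ + δ) := by
  rw [rpow_add hx]
  exact mul_le_mul (rpow_le_rpow_of_nonpos hx hxy hγ) (rpow_le_rpow_of_nonpos hx hxz hδ)
    (rpow_nonneg (hx.le.trans hxz) δ) (rpow_nonneg hx.le γ)

lemma integral_sub_rpow {p : ℝ} (hp : -1 < p) (a m : ℝ) :
    ∫ s in a..m, (m - s) ^ p = (m - a) ^ (p + 1) / (p + 1) := by
  rw [intervalIntegral.integral_comp_sub_left (fun x : ℝ => x ^ p) m, sub_self,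
    integral_rpow (Or.inl hp), zero_rpow (by linarith), sub_zero]

lemma intervalIntegrable_sub_rpow {p : ℝ} (hp : -1 < p) (a m : ℝ) :
    IntervalIntegrable (fun s : ℝ => (m - s) ^ p) volume a m := by
  have h : IntervalIntegrable (fun x : ℝ => x ^ p) volume (m - m) (m - a) :=
    intervalIntegral.intervalIntegrable_rpow' hp
  simpa using (h.comp_sub_left m).symm

lemma integral_sub_rpow_mul_sub_rpow_le {a t r α β : ℝ} (hα : α ≤ 1) (hβ : β ≤ 1)
    (hαβ : 1 < α + β) (ht : a ≤ t) (hr : a ≤ r) :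
    ∫ s in a..min t r, (t - s) ^ (β - 1) * (r - s) ^ (α - 1) ≤
      (min t r - a) ^ (α + β - 1) / (α + β - 1) := by
  set m := min t r
  have hp : -1 < α + β - 2 := by linarith
  have hbound : ∀ᵐ s, s ∈ Ioc a m →
      ‖(t - s) ^ (β - 1) * (r - s) ^ (α - 1)‖ ≤ (m - s) ^ (α + β - 2) := by
    filter_upwards [Measure.ae_ne volume m] with s hsm hs
    have hs : 0 < m - s := sub_pos.2 (lt_of_le_of_ne hs.2 hsm)
    have hts : m - s ≤ t - s := sub_le_sub_right (min_le_left t r) s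
    have hrs : m - s ≤ r - s := sub_le_sub_right (min_le_right t r) s
    rw [Real.norm_of_nonneg (mul_nonneg (rpow_nonneg (hs.le.trans hts) _)
      (rpow_nonneg (hs.le.trans hrs) _))]
    convert rpow_mul_rpow_le_rpow_add_of_nonpos (γ := β - 1) (δ := α - 1) hs hts hrs
      (by linarith) (by linarith) using 2
    ring
  calc _ ≤ ‖∫ s in a..m, (t - s) ^ (β - 1) * (r - s) ^ (α - 1)‖ := le_abs_self _
    _ ≤ ∫ s in a..m, (m - s) ^ (α + β - 2) :=
      intervalIntegral.norm_integral_le_of_norm_le (le_min ht hr) hbound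
        (intervalIntegrable_sub_rpow hp a m)
    _ = (m - a) ^ (α + β - 1) / (α + β - 1) := by
      rw [integral_sub_rpow hp]; ring_nf

lemma G_nonneg {a α β t r : ℝ} (hα : 0 < α) (hβ : 0 < β) (ht : a ≤ t) (hr : a ≤ r) :
    0 ≤ G a α β t r := by
  have hΓα := Gamma_pos_of_pos hα
  have hΓβ := Gamma_pos_of_pos hβ
  refine mul_nonneg (by positivity) (intervalIntegral.integral_nonneg (le_min ht hr) ?_)
  intro s hs
  exact mul_nonneg (rpow_nonneg (by linarith [hs.2, min_le_left t r]) _)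
    (rpow_nonneg (by linarith [hs.2, min_le_right t r]) _)

lemma G_le {a b α β t r : ℝ} (hα0 : 0 < α) (hα1 : α ≤ 1) (hβ0 : 0 < β) (hβ1 : β ≤ 1)
    (hαβ : 1 < α + β) (ht : t ∈ Icc a b) (hr : r ∈ Icc a b) :
    G a α β t r ≤ (b - a) ^ (α + β - 1) / ((α + β - 1) * Gamma α * Gamma β) := by
  have hΓα := Gamma_pos_of_pos hα0
  have hΓβ := Gamma_pos_of_pos hβ0
  have hσ : 0 < α + β - 1 := by linarith
  have hm : min t r - a ≤ b - a := by linarith [min_le_left t r, ht.2]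
  calc G a α β t r ≤ 1 / (Gamma α * Gamma β) * ((min t r - a) ^ (α + β - 1) / (α + β - 1)) :=
        mul_le_mul_of_nonneg_left
          (integral_sub_rpow_mul_sub_rpow_le hα1 hβ1 hαβ ht.1 hr.1) (by positivity)
    _ ≤ 1 / (Gamma α * Gamma β) * ((b - a) ^ (α + β - 1) / (α + β - 1)) := by
        gcongr
        linarith [le_min ht.1 hr.1]
    _ = (b - a) ^ (α + β - 1) / ((α + β - 1) * Gamma α * Gamma β) := by
        field_simp

lemma one_le_mul_integral_abs_of_eq_integral_kernel {a b C : ℝ} {k : ℝ → ℝ → ℝ}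
    {q u : ℝ → ℝ} (hab : a ≤ b) (hq : ContinuousOn q (Icc a b))
    (hu : ContinuousOn u (Icc a b)) (hne : ∃ t ∈ Icc a b, u t ≠ 0)
    (hk : ∀ t ∈ Icc a b, ∀ r ∈ Icc a b, |k t r| ≤ C)
    (heq : ∀ t ∈ Icc a b, u t = ∫ r in a..b, k t r * q r * u r) :
    1 ≤ C * ∫ r in a..b, |q r| := by
  obtain ⟨t₀, ht₀, hmax⟩ := isCompact_Icc.exists_isMaxOn (nonempty_Icc.2 hab) hu.abs
  obtain ⟨t₁, ht₁, hu₁⟩ := hne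
  have hM : 0 < |u t₀| := (abs_pos.2 hu₁).trans_le (hmax ht₁)
  have hbound : ∀ᵐ r, r ∈ Ioc a b → ‖k t₀ r * q r * u r‖ ≤ C * |u t₀| * |q r| := by
    refine Filter.Eventually.of_forall fun r hr ↦ ?_
    have hr : r ∈ Icc a b := Ioc_subset_Icc_self hr
    have hC : 0 ≤ C := (abs_nonneg _).trans (hk t₀ ht₀ r hr)
    calc ‖k t₀ r * q r * u r‖ = |k t₀ r| * |q r| * |u r| := by
          rw [Real.norm_eq_abs, abs_mul, abs_mul]
      _ ≤ C * |q r| * |u t₀| := 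
          mul_le_mul (mul_le_mul_of_nonneg_right (hk t₀ ht₀ r hr) (abs_nonneg _)) (hmax hr)
            (abs_nonneg _) (by positivity)
      _ = C * |u t₀| * |q r| := by ring
  have hu₀ : |u t₀| ≤ |u t₀| * (C * ∫ r in a..b, |q r|) := by
    calc |u t₀| = ‖∫ r in a..b, k t₀ r * q r * u r‖ := by rw [← heq t₀ ht₀, Real.norm_eq_abs]
      _ ≤ ∫ r in a..b, C * |u t₀| * |q r| :=
        intervalIntegral.norm_integral_le_of_norm_le hab hbound
          ((hq.abs.intervalIntegrable_of_Icc hab).const_mul _)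
      _ = |u t₀| * (C * ∫ r in a..b, |q r|) := by
        rw [intervalIntegral.integral_const_mul]; ring
  exact le_of_mul_le_mul_left (by simpa using hu₀) hM

theorem stmt_6_general (a b α β : ℝ) (hα0 : 0 < α) (hα1 : α ≤ 1) (hβ0 : 0 < β) (hβ1 : β ≤ 1)
    (hs1 : 1 < α + β) (hab : a < b)
    (q u : ℝ → ℝ) (hq : ContinuousOn q (Icc a b)) (hu : ContinuousOn u (Icc a b))
    (hne : ∃ t ∈ Icc a b, u t ≠ 0)
    (heq : ∀ t ∈ Icc a b, u t = ∫ r in a..b, G a α β t r * q r * u r) :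
    (α + β - 1) * Real.Gamma α * Real.Gamma β / (b - a) ^ (α + β - 1) ≤
      ∫ r in a..b, |q r| := by
  have hG : ∀ t ∈ Icc a b, ∀ r ∈ Icc a b,
      |G a α β t r| ≤ (b - a) ^ (α + β - 1) / ((α + β - 1) * Gamma α * Gamma β) :=
    fun t ht r hr ↦ by
      rw [abs_of_nonneg (G_nonneg hα0 hβ0 ht.1 hr.1)]
      exact G_le hα0 hα1 hβ0 hβ1 hs1 ht hr
  have h := one_le_mul_integral_abs_of_eq_integral_kernel hab.le hq hu hne hG heq
  have hΓα := Gamma_pos_of_pos hα0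
  have hΓβ := Gamma_pos_of_pos hβ0
  have hσ : 0 < α + β - 1 := by linarith
  have hpow : 0 < (b - a) ^ (α + β - 1) := rpow_pos_of_pos (sub_pos.2 hab) _
  rw [div_mul_eq_mul_div, one_le_div (by positivity)] at h
  rw [div_le_iff₀ (by positivity)]
  linarith

theorem stmt_6 (a b α β : ℝ) (hα0 : 0 < α) (hα1 : α ≤ 1) (hβ0 : 0 < β) (hβ1 : β ≤ 1)
    (hs1 : 1 < α + β) (hs2 : α + β ≤ 2) (hab : a < b)
    (q u : ℝ → ℝ) (hq : ContinuousOn q (Icc a b)) (hu : ContinuousOn u (Icc a b))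
    (hne : ∃ t ∈ Icc a b, u t ≠ 0)
    (heq : ∀ t ∈ Icc a b, u t = ∫ r in a..b, G a α β t r * q r * u r) :
    (α + β - 1) * Real.Gamma α * Real.Gamma β / (b - a) ^ (α + β - 1) ≤
      ∫ r in a..b, |q r| :=
  stmt_6_general a b α β hα0 hα1 hβ0 hβ1 hs1 hab q u hq hu hne heq
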